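/- Deterministic replay for unbuffered channels: if all channel communications in a recorded run use only unbuffered channels, then any two exhaustive trace replays of the thread-local traces assign identical vector clocks to each event (trace replay is confluent and yields a unique vector clock annotation). -/

import Mathlib

/-- Run-time events of the recorded trace (unbuffered channels only).
`postSend i j x` / `postRecv i j x` record the sender's thread id `i`
and program counter `j` for channel `x`; `postRecvClosed x` is a receive
on a closed channel. -/
inductive Ev : Type
  | signal (n : ℕ)
  | wait (n : ℕ)
  | pre
  | postSend (i j x : ℕ)
  | postRecv (i j x : ℕ)
  | postRecvClosed (x : ℕ)
  | postClose (x : ℕ)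
  | postDefault
  deriving DecidableEq

/-- A replay configuration: per-thread vector clocks, remaining
thread-local traces, and the per-thread log of vector clocks assigned to
the consumed (post) events, in order. -/
structure Cfg (k : ℕ) where
  clocks : Fin k → Fin k → ℕ
  traces : Fin k → List Ev
  log : Fin k → List (Fin k → ℕ)

def vcInc {k : ℕ} (i : Fin k) (cs : Fin k → ℕ) : Fin k → ℕ :=
  fun j => if j = i then cs j + 1 else cs j

def vcMax {k : ℕ} (a b : Fin k → ℕ) : Fin k → ℕ :=
  fun j => max (a j) (b j)

/-- Trace replay rules for unbuffered channels. -/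
inductive Step {k : ℕ} : Cfg k → Cfg k → Prop
  | signalWait (c : Cfg k) (i1 i2 : Fin k) (n : ℕ) (t1 t2 : List Ev)
      (h12 : i1 ≠ i2)
      (h1 : c.traces i1 = Ev.signal n :: t1)
      (h2 : c.traces i2 = Ev.wait n :: t2) :
      Step c ⟨Function.update (Function.update c.clocks i1 (vcInc i1 (c.clocks i1)))
                i2 (vcInc i2 (c.clocks i2)),
              Function.update (Function.update c.traces i1 t1) i2 t2,
              c.log⟩
  | sync (c : Cfg k) (i1 i2 : Fin k) (j x : ℕ) (t1 t2 : List Ev)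
      (h12 : i1 ≠ i2)
      (h1 : c.traces i1 = Ev.pre :: Ev.postSend i1.val j x :: t1)
      (h2 : c.traces i2 = Ev.pre :: Ev.postRecv i1.val j x :: t2) :
      Step c ⟨Function.update (Function.update c.clocks i1
                (vcMax (vcInc i1 (c.clocks i1)) (vcInc i2 (c.clocks i2))))
                i2 (vcMax (vcInc i1 (c.clocks i1)) (vcInc i2 (c.clocks i2))),
              Function.update (Function.update c.traces i1 t1) i2 t2,
              Function.update (Function.update c.log i1
                (c.log i1 ++ [vcMax (vcInc i1 (c.clocks i1)) (vcInc i2 (c.clocks i2))]))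
                i2 (c.log i2 ++ [vcMax (vcInc i1 (c.clocks i1)) (vcInc i2 (c.clocks i2))])⟩
  | close (c : Cfg k) (i : Fin k) (x : ℕ) (t : List Ev)
      (h : c.traces i = Ev.postClose x :: t) :
      Step c ⟨Function.update c.clocks i (vcInc i (c.clocks i)),
              Function.update c.traces i t,
              Function.update c.log i (c.log i ++ [vcInc i (c.clocks i)])⟩
  | recvClosed (c : Cfg k) (i : Fin k) (x : ℕ) (t : List Ev)
      (h : c.traces i = Ev.pre :: Ev.postRecvClosed x :: t) :
      Step c ⟨Function.update c.clocks i (vcInc i (c.clocks i)),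
              Function.update c.traces i t,
              Function.update c.log i (c.log i ++ [vcInc i (c.clocks i)])⟩
  | default (c : Cfg k) (i : Fin k) (t : List Ev)
      (h : c.traces i = Ev.pre :: Ev.postDefault :: t) :
      Step c ⟨Function.update c.clocks i (vcInc i (c.clocks i)),
              Function.update c.traces i t,
              Function.update c.log i (c.log i ++ [vcInc i (c.clocks i)])⟩

/-! Every replay step fires a rule instance (a redex) that reads and updates only the one or two
threads it touches. Receives, signals and waits each occur at most once in the recorded traces,
and replay only shortens traces, so this stays true along any replay. Consequently a thread is
touched by at most one enabled redex: distinct enabled redexes are disjoint, so each stays enabled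
after the other fires and the two firings commute. Replay therefore has the diamond property on
reachable configurations, and by Church–Rosser two replays that both run until no rule applies end
in the same configuration, clocks and logs included. -/

open Function

namespace Relation

theorem eq_of_reflTransGen_of_diamond_on {α : Type*} {r : α → α → Prop} {P : α → Prop}
    (hP : ∀ a b, P a → r a b → P b)
    (hdiamond : ∀ a b c, P a → r a b → r a c → b = c ∨ ∃ d, r b d ∧ r c d)
    {a b c : α} (ha : P a) (hab : ReflTransGen r a b) (hac : ReflTransGen r a c)
    (hb : ∀ d, ¬ r b d) (hc : ∀ d, ¬ r c d) : b = c := by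
  let s : α → α → Prop := fun x y => P x ∧ r x y
  have lift : ∀ {x}, ReflTransGen r a x → ReflTransGen s a x ∧ P x := by
    intro x h
    induction h with
    | refl => exact ⟨.refl, ha⟩
    | tail _ hyz ih => exact ⟨ih.1.tail ⟨ih.2, hyz⟩, hP _ _ ih.2 hyz⟩
  have hs : ∀ x y z, s x y → s x z → ∃ w, ReflGen s y w ∧ ReflTransGen s z w := by
    rintro x y z ⟨hx, hxy⟩ ⟨-, hxz⟩
    rcases hdiamond x y z hx hxy hxz with rfl | ⟨w, hyw, hzw⟩
    · exact ⟨y, .refl, .refl⟩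
    · exact ⟨w, .single ⟨hP x y hx hxy, hyw⟩, .single ⟨hP x z hx hxz, hzw⟩⟩
  have eq_of_normal : ∀ {x y}, (∀ d, ¬ r x d) → ReflTransGen s x y → x = y := fun hx h =>
    (h.cases_head).elim id fun ⟨_, hxe, _⟩ => (hx _ hxe.2).elim
  obtain ⟨d, hbd, hcd⟩ := church_rosser hs (lift hab).1 (lift hac).1
  exact (eq_of_normal hb hbd).trans (eq_of_normal hc hcd).symm

end Relation

theorem eq_of_mem_of_sum_count_le_one {ι α : Type*} [Fintype ι] [BEq α] [LawfulBEq α]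
    {f : ι → List α} {a : α} (h : ∑ i, (f i).count a ≤ 1) {i j : ι}
    (hi : a ∈ f i) (hj : a ∈ f j) : i = j := by
  classical
  by_contra hij
  have hpair := Finset.sum_le_sum_of_subset (f := fun i => (f i).count a)
    (Finset.subset_univ {i, j})
  rw [Finset.sum_pair hij] at hpair
  have := List.count_pos_iff.2 hi
  have := List.count_pos_iff.2 hj
  omega

namespace Cfg

variable {k : ℕ}

def thread (c : Cfg k) (l : Fin k) : List Ev × (Fin k → ℕ) × List (Fin k → ℕ) :=
  (c.traces l, c.clocks l, c.log l)

theorem ext_thread {c c' : Cfg k} (h : ∀ l, c.thread l = c'.thread l) : c = c' := by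
  cases c
  cases c'
  simp_all [thread, funext_iff]

def MatchesUnique (c : Cfg k) : Prop :=
  (∀ i j x : ℕ, ∑ l, (c.traces l).count (Ev.postRecv i j x) ≤ 1) ∧
  (∀ n : ℕ, ∑ l, (c.traces l).count (Ev.signal n) ≤ 1) ∧
  (∀ n : ℕ, ∑ l, (c.traces l).count (Ev.wait n) ≤ 1)

end Cfg

/-- A rule instance of `Step` without its trace tails, which `fire` recovers with `drop`. -/
inductive Redex (k : ℕ) : Type
  | signalWait (i1 i2 : Fin k) (n : ℕ)
  | sync (i1 i2 : Fin k) (j x : ℕ)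
  | close (i : Fin k) (x : ℕ)
  | recvClosed (i : Fin k) (x : ℕ)
  | default (i : Fin k)

namespace Redex

variable {k : ℕ}

def Touches : Redex k → Fin k → Prop
  | signalWait i1 i2 _, l | sync i1 i2 _ _, l => l = i1 ∨ l = i2
  | close i _, l | recvClosed i _, l | default i, l => l = i

def Enabled : Redex k → Cfg k → Prop
  | signalWait i1 i2 n, c => i1 ≠ i2 ∧ (∃ t, c.traces i1 = Ev.signal n :: t) ∧
      ∃ t, c.traces i2 = Ev.wait n :: t
  | sync i1 i2 j x, c => i1 ≠ i2 ∧
      (∃ t, c.traces i1 = Ev.pre :: Ev.postSend i1.val j x :: t) ∧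
      ∃ t, c.traces i2 = Ev.pre :: Ev.postRecv i1.val j x :: t
  | close i x, c => ∃ t, c.traces i = Ev.postClose x :: t
  | recvClosed i x, c => ∃ t, c.traces i = Ev.pre :: Ev.postRecvClosed x :: t
  | default i, c => ∃ t, c.traces i = Ev.pre :: Ev.postDefault :: t

def fireLocal (i : Fin k) (n : ℕ) (c : Cfg k) : Cfg k :=
  ⟨update c.clocks i (vcInc i (c.clocks i)),
   update c.traces i ((c.traces i).drop n),
   update c.log i (c.log i ++ [vcInc i (c.clocks i)])⟩

def fire : Redex k → Cfg k → Cfg k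
  | signalWait i1 i2 _, c =>
      ⟨update (update c.clocks i1 (vcInc i1 (c.clocks i1))) i2 (vcInc i2 (c.clocks i2)),
       update (update c.traces i1 ((c.traces i1).drop 1)) i2 ((c.traces i2).drop 1),
       c.log⟩
  | sync i1 i2 _ _, c =>
      let v := vcMax (vcInc i1 (c.clocks i1)) (vcInc i2 (c.clocks i2))
      ⟨update (update c.clocks i1 v) i2 v,
       update (update c.traces i1 ((c.traces i1).drop 2)) i2 ((c.traces i2).drop 2),
       update (update c.log i1 (c.log i1 ++ [v])) i2 (c.log i2 ++ [v])⟩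
  | close i _, c => fireLocal i 1 c
  | recvClosed i _, c | default i, c => fireLocal i 2 c

theorem thread_fire_of_not_touches (r : Redex k) (c : Cfg k) {l : Fin k}
    (hl : ¬ r.Touches l) : (r.fire c).thread l = c.thread l := by
  cases r <;> simp_all [Touches, fire, fireLocal, Cfg.thread]

theorem thread_fire_congr (r : Redex k) {c c' : Cfg k}
    (h : ∀ m, r.Touches m → c.thread m = c'.thread m) {l : Fin k} (hl : r.Touches l) :
    (r.fire c).thread l = (r.fire c').thread l := by
  cases r with
  | signalWait i1 i2 n | sync i1 i2 j x =>
    have h1 := h i1 (.inl rfl)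
    have h2 := h i2 (.inr rfl)
    simp only [Cfg.thread, Prod.mk.injEq] at h1 h2
    by_cases hl2 : l = i2
    · subst hl2; simp [fire, Cfg.thread, h1, h2]
    · obtain rfl : l = i1 := hl.resolve_right hl2
      simp [fire, Cfg.thread, update_of_ne hl2, h1, h2]
  | close i x | recvClosed i x | default i =>
    obtain rfl : l = i := hl
    have := h l rfl
    simp only [Cfg.thread, Prod.mk.injEq] at this
    simp [fire, fireLocal, Cfg.thread, this]

theorem Enabled.congr {r : Redex k} {c c' : Cfg k}
    (h : ∀ m, r.Touches m → c.traces m = c'.traces m) (hr : r.Enabled c) : r.Enabled c' := by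
  cases r <;> simp_all [Touches, Enabled]

theorem fire_comm {r₁ r₂ : Redex k} (c : Cfg k) (hd : ∀ l, r₁.Touches l → ¬ r₂.Touches l) :
    r₂.fire (r₁.fire c) = r₁.fire (r₂.fire c) := by
  refine Cfg.ext_thread fun l => ?_
  by_cases h₁ : r₁.Touches l
  · rw [thread_fire_of_not_touches _ _ (hd l h₁)]
    exact thread_fire_congr r₁ (fun m hm => (thread_fire_of_not_touches _ _ (hd m hm)).symm) h₁
  by_cases h₂ : r₂.Touches l
  · rw [thread_fire_of_not_touches _ _ h₁]
    exact thread_fire_congr r₂ (fun m hm => thread_fire_of_not_touches _ _ fun h => hd m h hm) h₂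
  · simp only [thread_fire_of_not_touches _ _ h₁, thread_fire_of_not_touches _ _ h₂]

theorem traces_fire_suffix (r : Redex k) (c : Cfg k) (l : Fin k) :
    (r.fire c).traces l <:+ c.traces l := by
  cases r <;> simp only [fire, fireLocal, update_apply] <;> split_ifs <;>
    first | subst_vars; exact List.drop_suffix _ _ | exact List.suffix_refl _

/-- Two redexes enabled at thread `l` read the same head events there, and uniqueness of the
matching wait, signal or receive then pins down the partner thread. -/
theorem eq_of_enabled_of_touches {c : Cfg k} (hc : c.MatchesUnique) {r₁ r₂ : Redex k}
    (h₁ : r₁.Enabled c) (h₂ : r₂.Enabled c) {l : Fin k} (hl₁ : r₁.Touches l)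
    (hl₂ : r₂.Touches l) : r₁ = r₂ := by
  obtain ⟨hrecv, hsig, hwait⟩ := hc
  have sig_uniq n {l l' t t'} (h : c.traces l = Ev.signal n :: t)
      (h' : c.traces l' = Ev.signal n :: t') : l = l' :=
    eq_of_mem_of_sum_count_le_one (hsig n) (by simp [h]) (by simp [h'])
  have wait_uniq n {l l' t t'} (h : c.traces l = Ev.wait n :: t)
      (h' : c.traces l' = Ev.wait n :: t') : l = l' :=
    eq_of_mem_of_sum_count_le_one (hwait n) (by simp [h]) (by simp [h'])
  have recv_uniq i j x {l l' t t'} (h : c.traces l = Ev.pre :: Ev.postRecv i j x :: t)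
      (h' : c.traces l' = Ev.pre :: Ev.postRecv i j x :: t') : l = l' :=
    eq_of_mem_of_sum_count_le_one (hrecv i j x) (by simp [h]) (by simp [h'])
  cases r₁ <;> cases r₂ <;> simp only [Enabled, Touches] at h₁ h₂ hl₁ hl₂ ⊢ <;>
    grind

theorem not_enabled_of_forall_pre {c : Cfg k} (hc : ∀ l, ∀ e ∈ c.traces l, e = Ev.pre)
    (r : Redex k) : ¬ r.Enabled c := by
  intro h
  cases r with
  | signalWait i1 _ _ | sync i1 _ _ _ =>
    obtain ⟨-, ⟨t, ht⟩, -⟩ := h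
    simpa [ht] using hc i1
  | close i _ | recvClosed i _ | default i =>
    obtain ⟨t, ht⟩ := h
    simpa [ht] using hc i

end Redex

theorem step_iff_exists_redex {k : ℕ} {c c' : Cfg k} :
    Step c c' ↔ ∃ r : Redex k, r.Enabled c ∧ c' = r.fire c := by
  constructor
  · intro h
    cases h with
    | signalWait i1 i2 n t1 t2 h12 h1 h2 =>
        exact ⟨.signalWait i1 i2 n, ⟨h12, ⟨_, h1⟩, _, h2⟩, by simp [Redex.fire, h1, h2]⟩
    | sync i1 i2 j x t1 t2 h12 h1 h2 =>
        exact ⟨.sync i1 i2 j x, ⟨h12, ⟨_, h1⟩, _, h2⟩, by simp [Redex.fire, h1, h2]⟩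
    | close i x t h => exact ⟨.close i x, ⟨_, h⟩, by simp [Redex.fire, Redex.fireLocal, h]⟩
    | recvClosed i x t h =>
        exact ⟨.recvClosed i x, ⟨_, h⟩, by simp [Redex.fire, Redex.fireLocal, h]⟩
    | default i t h => exact ⟨.default i, ⟨_, h⟩, by simp [Redex.fire, Redex.fireLocal, h]⟩
  · rintro ⟨r, hr, rfl⟩
    cases r with
    | signalWait i1 i2 n =>
        obtain ⟨h12, ⟨t1, h1⟩, t2, h2⟩ := hr
        simpa [Redex.fire, h1, h2] using Step.signalWait c i1 i2 n t1 t2 h12 h1 h2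
    | sync i1 i2 j x =>
        obtain ⟨h12, ⟨t1, h1⟩, t2, h2⟩ := hr
        simpa [Redex.fire, h1, h2] using Step.sync c i1 i2 j x t1 t2 h12 h1 h2
    | close i x =>
        obtain ⟨t, h⟩ := hr
        simpa [Redex.fire, Redex.fireLocal, h] using Step.close c i x t h
    | recvClosed i x =>
        obtain ⟨t, h⟩ := hr
        simpa [Redex.fire, Redex.fireLocal, h] using Step.recvClosed c i x t h
    | default i =>
        obtain ⟨t, h⟩ := hr
        simpa [Redex.fire, Redex.fireLocal, h] using Step.default c i t h

namespace Step

variable {k : ℕ}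

theorem matchesUnique {a b : Cfg k} (hab : Step a b) (ha : a.MatchesUnique) :
    b.MatchesUnique := by
  obtain ⟨r, -, rfl⟩ := step_iff_exists_redex.1 hab
  have count_le e : ∑ l, ((r.fire a).traces l).count e ≤ ∑ l, (a.traces l).count e :=
    Finset.sum_le_sum fun l _ => (r.traces_fire_suffix a l).sublist.count_le e
  exact ⟨fun i j x => (count_le _).trans (ha.1 i j x), fun n => (count_le _).trans (ha.2.1 n),
    fun n => (count_le _).trans (ha.2.2 n)⟩

theorem diamond {a b c : Cfg k} (ha : a.MatchesUnique) (hab : Step a b) (hac : Step a c) :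
    b = c ∨ ∃ d, Step b d ∧ Step c d := by
  obtain ⟨r₁, h₁, rfl⟩ := step_iff_exists_redex.1 hab
  obtain ⟨r₂, h₂, rfl⟩ := step_iff_exists_redex.1 hac
  by_cases hr : r₁ = r₂
  · exact .inl (hr ▸ rfl)
  have hd l (hl₁ : r₁.Touches l) (hl₂ : r₂.Touches l) : False :=
    hr (Redex.eq_of_enabled_of_touches ha h₁ h₂ hl₁ hl₂)
  have h₂' : r₂.Enabled (r₁.fire a) := h₂.congr fun m hm =>
    congrArg Prod.fst (Redex.thread_fire_of_not_touches r₁ a (hd m · hm)).symm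
  have h₁' : r₁.Enabled (r₂.fire a) := h₁.congr fun m hm =>
    congrArg Prod.fst (Redex.thread_fire_of_not_touches r₂ a (hd m hm)).symm
  exact .inr ⟨_, step_iff_exists_redex.2 ⟨r₂, h₂', rfl⟩,
    step_iff_exists_redex.2 ⟨r₁, h₁', Redex.fire_comm a hd⟩⟩

theorem not_of_forall_pre {c d : Cfg k} (hc : ∀ l, ∀ e ∈ c.traces l, e = Ev.pre) :
    ¬ Step c d := fun h =>
  let ⟨r, hr, _⟩ := step_iff_exists_redex.1 h
  Redex.not_enabled_of_forall_pre hc r hr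

end Step

theorem deterministic_replay_unbuffered_general {k : ℕ} (tr0 : Fin k → List Ev)
    (hrecvUniq : ∀ i j x : ℕ, (∑ l : Fin k, (tr0 l).count (Ev.postRecv i j x)) ≤ 1)
    (hsigUniq : ∀ n : ℕ, (∑ l : Fin k, (tr0 l).count (Ev.signal n)) ≤ 1)
    (hwaitUniq : ∀ n : ℕ, (∑ l : Fin k, (tr0 l).count (Ev.wait n)) ≤ 1)
    (c c' : Cfg k)
    (hc : Relation.ReflTransGen Step ⟨fun _ _ => 0, tr0, fun _ => []⟩ c)
    (hc' : Relation.ReflTransGen Step ⟨fun _ _ => 0, tr0, fun _ => []⟩ c')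
    (hex : ∀ i : Fin k, ∀ e ∈ c.traces i, e = Ev.pre)
    (hex' : ∀ i : Fin k, ∀ e ∈ c'.traces i, e = Ev.pre) :
    c.log = c'.log ∧ c.clocks = c'.clocks := by
  have hcc' : c = c' :=
    Relation.eq_of_reflTransGen_of_diamond_on (P := Cfg.MatchesUnique)
      (fun _ _ ha hab => hab.matchesUnique ha) (fun _ _ _ => Step.diamond)
      ⟨hrecvUniq, hsigUniq, hwaitUniq⟩ hc hc'
      (fun _ => Step.not_of_forall_pre hex) (fun _ => Step.not_of_forall_pre hex')
  exact hcc' ▸ ⟨rfl, rfl⟩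

/-- Deterministic replay for unbuffered channels: any two exhaustive
replays of well-formed recorded thread-local traces assign identical
vector clocks to each event and end with identical thread clocks. -/
theorem deterministic_replay_unbuffered {k : ℕ} (tr0 : Fin k → List Ev)
    (hsendLoc : ∀ (l : Fin k) (i j x : ℕ), Ev.postSend i j x ∈ tr0 l → i = l.val)
    (hsendUniq : ∀ i j x : ℕ, (∑ l : Fin k, (tr0 l).count (Ev.postSend i j x)) ≤ 1)
    (hrecvUniq : ∀ i j x : ℕ, (∑ l : Fin k, (tr0 l).count (Ev.postRecv i j x)) ≤ 1)
    (hsigUniq : ∀ n : ℕ, (∑ l : Fin k, (tr0 l).count (Ev.signal n)) ≤ 1)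
    (hwaitUniq : ∀ n : ℕ, (∑ l : Fin k, (tr0 l).count (Ev.wait n)) ≤ 1)
    (c c' : Cfg k)
    (hc : Relation.ReflTransGen Step ⟨fun _ _ => 0, tr0, fun _ => []⟩ c)
    (hc' : Relation.ReflTransGen Step ⟨fun _ _ => 0, tr0, fun _ => []⟩ c')
    (hex : ∀ i : Fin k, ∀ e ∈ c.traces i, e = Ev.pre)
    (hex' : ∀ i : Fin k, ∀ e ∈ c'.traces i, e = Ev.pre) :
    c.log = c'.log ∧ c.clocks = c'.clocks :=
  deterministic_replay_unbuffered_general tr0 hrecvUniq hsigUniq hwaitUniq c c' hc hc' hex hex'
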